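/- If (x_n) statistically converges to L, then there exists a subset A ⊆ ℕ of natural density 1 such that the subsequence of (x_n) indexed by A converges to L in the usual sense. -/
import Mathlib


open Filter
open scoped Classical

noncomputable def statTendsto (x : ℕ → ℝ) (L : ℝ) : Prop :=
  ∀ ε > 0, Tendsto
    (fun n => (((Finset.range n).filter (fun k => ε ≤ |x k - L|)).card : ℝ) / n)
    atTop (nhds 0)

theorem stmt17 (x : ℕ → ℝ) (L : ℝ) (h : statTendsto x L) :
    ∃ A : Set ℕ,
      Tendsto (fun n => (((Finset.range n).filter (fun k => k ∈ A)).card : ℝ) / n)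
        atTop (nhds 1) ∧
      Tendsto x (atTop ⊓ Filter.principal A) (nhds L) := by
  have hM : ∀ j : ℕ, ∃ M : ℕ, ∀ n, M ≤ n →
      (((Finset.range n).filter (fun k => 1/((j:ℝ)+1) ≤ |x k - L|)).card : ℝ) / n
        < 1/((j:ℝ)+1) := by
    intro j
    have hpos : (0:ℝ) < 1/((j:ℝ)+1) := by positivity
    have h2 := (h _ hpos).eventually_lt_const hpos
    exact eventually_atTop.mp h2
  choose M hMs using hM
  set N : ℕ → ℕ := fun j => Nat.rec 0 (fun j Nj => max (M j) Nj + 1) j with hNdef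
  have hNsucc : ∀ j, N (j+1) = max (M j) (N j) + 1 := fun j => rfl
  have hNlt : ∀ j, N j < N (j+1) := by
    intro j; rw [hNsucc]
    exact Nat.lt_succ_of_le (le_max_right _ _)
  have hNmono : StrictMono N := strictMono_nat_of_lt_succ hNlt
  have hNM : ∀ j, M j ≤ N (j+1) := by
    intro j; rw [hNsucc]
    exact le_trans (le_max_left _ _) (Nat.le_succ _)
  have hNge : ∀ j, j ≤ N j := fun j => hNmono.le_apply
  set A : Set ℕ := {k | ∀ j, N (j+1) ≤ k → |x k - L| < 1/((j:ℝ)+1)} with hA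
  have key : ∀ j n, N (j+1) ≤ n → n < N (j+2) →
      ((Finset.range n).filter (fun k => k ∉ A)).card ≤
      ((Finset.range n).filter (fun k => 1/((j:ℝ)+1) ≤ |x k - L|)).card := by
    intro j n h1 h2
    apply Finset.card_le_card
    intro k hk
    simp only [Finset.mem_filter, Finset.mem_range, hA, Set.mem_setOf_eq] at hk ⊢
    obtain ⟨hkn, hkA⟩ := hk
    refine ⟨hkn, ?_⟩
    push_neg at hkA
    obtain ⟨j', hj'1, hj'2⟩ := hkA
    have hj'j : j' ≤ j := by
      by_contra hc
      push_neg at hc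
      have := hNmono.monotone (show j+2 ≤ j'+1 by omega)
      omega
    calc 1/((j:ℝ)+1) ≤ 1/((j':ℝ)+1) := by
            apply one_div_le_one_div_of_le
            · positivity
            · have : (j':ℝ) ≤ j := by exact_mod_cast hj'j
              linarith
      _ ≤ _ := hj'2
  have hB : Tendsto (fun n => (((Finset.range n).filter (fun k => k ∉ A)).card : ℝ) / n)
      atTop (nhds 0) := by
    rw [NormedAddCommGroup.tendsto_nhds_zero]
    intro ε hε
    obtain ⟨J, hJ⟩ := exists_nat_one_div_lt hε
    rw [eventually_atTop]
    refine ⟨N (J+1), fun n hn => ?_⟩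
    have hex : ∃ m, n < N (m+1) :=
      ⟨n+1, lt_of_lt_of_le (by omega) (hNge (n+2))⟩
    have hm0spec := Nat.find_spec hex
    have hm0J : J < Nat.find hex := by
      by_contra hc
      push_neg at hc
      have hle2 : N (Nat.find hex + 1) ≤ N (J + 1) := hNmono.monotone (show Nat.find hex + 1 ≤ J + 1 by omega)
      exact lt_irrefl n (lt_of_lt_of_le hm0spec (le_trans hle2 hn))
    obtain ⟨j, hj⟩ : ∃ j, Nat.find hex = j + 1 := ⟨Nat.find hex - 1, by omega⟩
    have hjJ : J ≤ j := by omega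
    have h1 : N (j+1) ≤ n := by
      exact Nat.not_lt.mp (Nat.find_min hex (show j < Nat.find hex by omega))
    have h2 : n < N (j+2) := by rw [hj] at hm0spec; exact hm0spec
    have hnM : M j ≤ n := le_trans (hNM j) h1
    have hfj := hMs j n hnM
    have hle := key j n h1 h2
    have hnpos : (0:ℝ) < n := by
      have h11 : 1 ≤ N 1 := hNge 1
      have h12 : N 1 ≤ N (J+1) := hNmono.monotone (show 1 ≤ J+1 by omega)
      have h13 : 1 ≤ n := by omega
      exact_mod_cast h13
    have hdiv : (((Finset.range n).filter (fun k => k ∉ A)).card : ℝ) / n ≤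
        (((Finset.range n).filter (fun k => 1/((j:ℝ)+1) ≤ |x k - L|)).card : ℝ) / n := by
      gcongr
    have h1J : 1/((j:ℝ)+1) ≤ 1/((J:ℝ)+1) := by
      apply one_div_le_one_div_of_le
      · positivity
      · have : (J:ℝ) ≤ j := by exact_mod_cast hjJ
        linarith
    rw [Real.norm_of_nonneg (by positivity)]
    calc (((Finset.range n).filter (fun k => k ∉ A)).card : ℝ) / n
        ≤ (((Finset.range n).filter (fun k => 1/((j:ℝ)+1) ≤ |x k - L|)).card : ℝ) / n := hdiv
      _ < 1/((j:ℝ)+1) := hfj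
      _ ≤ 1/((J:ℝ)+1) := h1J
      _ < ε := hJ
  refine ⟨A, ?_, ?_⟩
  · have htend : Tendsto (fun n => 1 - (((Finset.range n).filter (fun k => k ∉ A)).card : ℝ) / n)
        atTop (nhds 1) := by
      have := (tendsto_const_nhds (x := (1:ℝ)) (f := atTop)).sub hB
      rwa [sub_zero] at this
    apply htend.congr'
    filter_upwards [eventually_gt_atTop 0] with n hn
    have hc : ((Finset.range n).filter (fun k => k ∈ A)).card +
        ((Finset.range n).filter (fun k => k ∉ A)).card = n := by
      rw [Finset.card_filter_add_card_filter_not, Finset.card_range]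
    have hnne : (n:ℝ) ≠ 0 := by positivity
    have hcr : (((Finset.range n).filter (fun k => k ∈ A)).card : ℝ) =
        n - (((Finset.range n).filter (fun k => k ∉ A)).card : ℝ) := by
      have := congrArg (Nat.cast : ℕ → ℝ) hc
      push_cast at this
      linarith
    rw [eq_comm, hcr, sub_div, div_self hnne]
  · rw [Metric.tendsto_nhds]
    intro ε hε
    obtain ⟨J, hJ⟩ := exists_nat_one_div_lt hε
    rw [eventually_inf_principal]
    filter_upwards [eventually_ge_atTop (N (J+1))] with k hk hkA
    rw [Real.dist_eq]
    exact lt_trans (hkA J hk) hJ
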